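/- Let I be an SMTI-Diverse instance in which no preference list has ties and every lower quota is zero. Let w ∈ W be a college with q_w ≥ 1 and let u ∈ A(w) be such that τ_u ≤ u_w componentwise and w strictly prefers u to every other student u' ∈ A(w) with τ_{u'} ≤ u_w componentwise. Then every feasible and stable matching M satisfies M(u) ⪰_u w; in particular, u is matched by M. -/

import Mathlib

open scoped Classical

noncomputable section

/-- An SMTI-Diverse instance: students `S`, colleges `C`, types `T`.
Preferences are encoded by rank functions (smaller rank = more preferred);
ties are allowed.  `acc` is the (symmetric) acceptability relation, `tau`
the 0/1 type vectors (encoded as `Bool`), `lq`/`uq` the lower/upper quota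
vectors and `cap` the capacities. -/
structure SMTI (S C T : Type) [Fintype S] [Fintype C] [Fintype T] where
  acc : S → C → Prop
  tau : S → T → Bool
  rankS : S → C → ℕ
  rankC : C → S → ℕ
  lq : C → T → ℕ
  uq : C → T → ℕ
  cap : C → ℕ

namespace SMTI

variable {S C T : Type} [Fintype S] [Fintype C] [Fintype T]

/-- `f : S → Option C` encodes a matching: every assigned college is acceptable. -/
def IsMatching (I : SMTI S C T) (f : S → Option C) : Prop :=
  ∀ u w, f u = some w → I.acc u w

/-- The set `M(w)` of students assigned to college `w`. -/
def assigned (I : SMTI S C T) (f : S → Option C) (w : C) : Finset S :=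
  Finset.univ.filter fun u => f u = some w

/-- The number of students of type `z` assigned to `w`. -/
def typeLoad (I : SMTI S C T) (f : S → Option C) (w : C) (z : T) : ℕ :=
  ∑ u ∈ I.assigned f w, (I.tau u z).toNat

/-- Feasibility: capacities respected and quotas met at all colleges. -/
def Feasible (I : SMTI S C T) (f : S → Option C) : Prop :=
  ∀ w, (I.assigned f w).card ≤ I.cap w ∧
    ∀ z, I.lq w z ≤ I.typeLoad f w z ∧ I.typeLoad f w z ≤ I.uq w z

/-- `u` strictly prefers `w` to its assigned college (in particular if unmatched). -/
def PrefersTo (I : SMTI S C T) (f : S → Option C) (u : S) (w : C) : Prop :=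
  ∀ w', f u = some w' → I.rankS u w < I.rankS u w'

/-- `{u,w}` is a blocking pair of `f` witnessed by `U' ⊆ M(w)`. -/
def BlocksWith (I : SMTI S C T) (f : S → Option C) (u : S) (w : C) (U' : Finset S) : Prop :=
  f u ≠ some w ∧ I.acc u w ∧ I.PrefersTo f u w ∧
  U' ⊆ I.assigned f w ∧
  (∀ u' ∈ U', I.rankC w u < I.rankC w u') ∧
  (I.assigned f w \ U').card + 1 ≤ I.cap w ∧
  ∀ z, I.lq w z ≤ (I.tau u z).toNat + ∑ u' ∈ I.assigned f w \ U', (I.tau u' z).toNat ∧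
    (I.tau u z).toNat + ∑ u' ∈ I.assigned f w \ U', (I.tau u' z).toNat ≤ I.uq w z

/-- `{u,w}` is a blocking pair of `f` (with some witness). -/
def BlockingPair (I : SMTI S C T) (f : S → Option C) (u : S) (w : C) : Prop :=
  ∃ U', I.BlocksWith f u w U'

/-- Stability: no blocking pair at all. -/
def Stable (I : SMTI S C T) (f : S → Option C) : Prop :=
  ∀ u w, ¬ I.BlockingPair f u w

end SMTI

/-!
If `u` is not matched to a college it weakly prefers to `w`, then `{u, w}` blocks `M` with the
witness `U' = M(w)`: evicting all of `M(w)` leaves room for `u` (as `q_w ≥ 1`), the lower quotas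
are zero and `u` alone fits below `u_w`. Every student of `M(w)` is acceptable to `w` and fits
below `u_w` by feasibility, so `w` ranks `u` strictly above each of them.
-/

namespace SMTI

variable {S C T : Type} [Fintype S] [Fintype C] [Fintype T] (I : SMTI S C T) (f : S → Option C)

theorem mem_assigned {w : C} {u : S} : u ∈ I.assigned f w ↔ f u = some w := by
  simp [assigned]

theorem tau_toNat_le_typeLoad {w : C} {u : S} (hu : u ∈ I.assigned f w) (z : T) :
    (I.tau u z).toNat ≤ I.typeLoad f w z :=
  Finset.single_le_sum (f := fun s => (I.tau s z).toNat) (fun _ _ => Nat.zero_le _) hu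

variable {I f}

theorem Feasible.tau_toNat_le_uq (hfeas : I.Feasible f) {w : C} {u : S}
    (hu : u ∈ I.assigned f w) (z : T) : (I.tau u z).toNat ≤ I.uq w z :=
  (tau_toNat_le_typeLoad I f hu z).trans ((hfeas w).2 z).2

theorem PrefersTo.ne_some {u : S} {w : C} (h : I.PrefersTo f u w) : f u ≠ some w :=
  fun hw => lt_irrefl _ (h w hw)

theorem exists_rankS_le_of_not_prefersTo {u : S} {w : C} (h : ¬ I.PrefersTo f u w) :
    ∃ w', f u = some w' ∧ I.rankS u w' ≤ I.rankS u w := by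
  simpa [PrefersTo] using h

theorem blocksWith_assigned {u : S} {w : C} (hpref : I.PrefersTo f u w) (hacc : I.acc u w)
    (hrank : ∀ u' ∈ I.assigned f w, I.rankC w u < I.rankC w u') (hq : 1 ≤ I.cap w)
    (hlq : ∀ z, I.lq w z = 0) (hfit : ∀ z, (I.tau u z).toNat ≤ I.uq w z) :
    I.BlocksWith f u w (I.assigned f w) := by
  refine ⟨hpref.ne_some, hacc, hpref, subset_rfl, hrank, by simpa using hq, ?_⟩
  intro z
  simp [hlq z, hfit z]

end SMTI

theorem stmt17_general {S C T : Type} [Fintype S] [Fintype C] [Fintype T]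
    (I : SMTI S C T)
    (hlq : ∀ w z, I.lq w z = 0)
    (w : C) (hq : 1 ≤ I.cap w)
    (u : S) (hacc : I.acc u w)
    (hfit : ∀ z, (I.tau u z).toNat ≤ I.uq w z)
    (hbest : ∀ u' : S, u' ≠ u → I.acc u' w → (∀ z, (I.tau u' z).toNat ≤ I.uq w z) →
      I.rankC w u < I.rankC w u')
    (f : S → Option C) (hM : I.IsMatching f) (hfeas : I.Feasible f) (hstab : I.Stable f) :
    ∃ w' : C, f u = some w' ∧ I.rankS u w' ≤ I.rankS u w := by
  refine SMTI.exists_rankS_le_of_not_prefersTo fun hpref => hstab u w ⟨I.assigned f w, ?_⟩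
  have hrank : ∀ u' ∈ I.assigned f w, I.rankC w u < I.rankC w u' := by
    intro u' hu'
    have hfu' : f u' = some w := (I.mem_assigned f).1 hu'
    have hne : u' ≠ u := by
      rintro rfl
      exact hpref.ne_some hfu'
    exact hbest u' hne (hM u' w hfu') (hfeas.tau_toNat_le_uq hu')
  exact SMTI.blocksWith_assigned hpref hacc hrank hq (hlq w) hfit

/-- Suppose there are no ties and all lower quotas are zero.
If `w` has positive capacity and `u` is the student `w` strictly prefers to every
other acceptable student whose type vector fits below `w`'s upper quotas (and `u`
itself fits), then every feasible and stable matching assigns to `u` a college it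
weakly prefers to `w`; in particular `u` is matched. -/
theorem stmt17 {S C T : Type} [Fintype S] [Fintype C] [Fintype T]
    (I : SMTI S C T)
    (hstrictS : ∀ (s : S) (c c' : C), I.acc s c → I.acc s c' →
      I.rankS s c = I.rankS s c' → c = c')
    (hstrictC : ∀ (c : C) (s s' : S), I.acc s c → I.acc s' c →
      I.rankC c s = I.rankC c s' → s = s')
    (hlq : ∀ w z, I.lq w z = 0)
    (w : C) (hq : 1 ≤ I.cap w)
    (u : S) (hacc : I.acc u w)
    (hfit : ∀ z, (I.tau u z).toNat ≤ I.uq w z)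
    (hbest : ∀ u' : S, u' ≠ u → I.acc u' w → (∀ z, (I.tau u' z).toNat ≤ I.uq w z) →
      I.rankC w u < I.rankC w u')
    (f : S → Option C) (hM : I.IsMatching f) (hfeas : I.Feasible f) (hstab : I.Stable f) :
    ∃ w' : C, f u = some w' ∧ I.rankS u w' ≤ I.rankS u w :=
  stmt17_general I hlq w hq u hacc hfit hbest f hM hfeas hstab
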